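/- arXiv:2602.21138 — 2 statements merged into one kernel-verified Lean document; each statement's English description precedes it below -/
import Mathlib

section
/- Run FISTA with step η = 1 and momentum β = (1−√α)/(1+√α), initialized at x_{−1} = x₀ = 0, on the over-regularized objective F_{2ρ} = f + g_B, and suppose R > 0 satisfies ‖y_k − x_B⋆‖₂ ≤ R for all k ≥ 0. If a vertex i satisfies x_{A,i}⋆ = 0 (coordinate i is inactive at the minimizer of problem (A)) and d_i ≥ (R/(αρ))², then FISTA never activates node i: x_{k,i} = 0 and y_{k,i} = 0 for all k ≥ 0. -/
open Finset

noncomputable section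

/-- Degree of vertex `i` in the (unweighted) graph with adjacency matrix `A`. -/
def deg {n : ℕ} (A : Matrix (Fin n) (Fin n) ℝ) (i : Fin n) : ℝ := ∑ j, A i j

/-- The PageRank matrix `Q = αI + ((1−α)/2)·𝓛 = ((1+α)/2)·I − ((1−α)/2)·D^{-1/2} A D^{-1/2}`. -/
def Qmat {n : ℕ} (A : Matrix (Fin n) (Fin n) ℝ) (α : ℝ) : Matrix (Fin n) (Fin n) ℝ :=
  fun i j => (if i = j then (1 + α) / 2 else 0)
    - ((1 - α) / 2) * A i j / (Real.sqrt (deg A i) * Real.sqrt (deg A j))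

/-- Smooth PageRank objective `f(x) = (1/2)⟨x, Qx⟩ − α⟨D^{-1/2} e_v, x⟩` with seed vertex `v`. -/
def fPR {n : ℕ} (A : Matrix (Fin n) (Fin n) ℝ) (α : ℝ) (v : Fin n) (x : Fin n → ℝ) : ℝ :=
  (1 / 2) * (∑ i, x i * (Qmat A α).mulVec x i) - α * (x v / Real.sqrt (deg A v))

/-- Gradient of `fPR`: `∇f(x) = Qx − α·D^{-1/2} e_v`. -/
def gradf {n : ℕ} (A : Matrix (Fin n) (Fin n) ℝ) (α : ℝ) (v : Fin n) (x : Fin n → ℝ) :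
    Fin n → ℝ :=
  fun i => (Qmat A α).mulVec x i - α * (if i = v then 1 / Real.sqrt (deg A v) else 0)

/-- Weighted ℓ1 norm `‖D^{1/2} x‖₁ = ∑ i, √(d i)·|x i|`. -/
def l1w {n : ℕ} (A : Matrix (Fin n) (Fin n) ℝ) (x : Fin n → ℝ) : ℝ :=
  ∑ i, Real.sqrt (deg A i) * |x i|

/-- ℓ1-regularized PageRank objective `F_ρ(x) = f(x) + αρ‖D^{1/2}x‖₁`. -/
def Freg {n : ℕ} (A : Matrix (Fin n) (Fin n) ℝ) (α : ℝ) (v : Fin n) (ρ : ℝ)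
    (x : Fin n → ℝ) : ℝ :=
  fPR A α v x + α * ρ * l1w A x

/-- Coordinatewise soft-thresholding at levels `t·√(d i)`: this is the proximal map
`prox_{ηg}` of `g(x) = cαρ‖D^{1/2}x‖₁` with `t = η·c·α·ρ`. -/
def softT {n : ℕ} (A : Matrix (Fin n) (Fin n) ℝ) (t : ℝ) (w : Fin n → ℝ) : Fin n → ℝ :=
  fun i => Real.sign (w i) * max (|w i| - t * Real.sqrt (deg A i)) 0

/-- Euclidean norm on `Fin n → ℝ`. -/
def enorm2 {n : ℕ} (x : Fin n → ℝ) : ℝ := Real.sqrt (∑ i, (x i) ^ 2)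

open Classical in
/-- Degree-weighted volume of a vertex set: `vol(S) = ∑_{i ∈ S} d i`. -/
def volS {n : ℕ} (A : Matrix (Fin n) (Fin n) ℝ) (S : Set (Fin n)) : ℝ :=
  ∑ i ∈ Finset.univ.filter (fun i => i ∈ S), deg A i

/-- Neighbor set of a vertex. -/
def nbr {n : ℕ} (A : Matrix (Fin n) (Fin n) ℝ) (i : Fin n) : Set (Fin n) := {j | A i j ≠ 0}

/-- Vertex boundary of `S`: vertices outside `S` with a neighbor in `S`. -/
def bdry {n : ℕ} (A : Matrix (Fin n) (Fin n) ℝ) (S : Set (Fin n)) : Set (Fin n) :=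
  {j | j ∉ S ∧ ∃ i ∈ S, A j i ≠ 0}

/-- `A` is the adjacency matrix of a finite undirected unweighted loopless graph
with all degrees positive. -/
structure IsGraph {n : ℕ} (A : Matrix (Fin n) (Fin n) ℝ) : Prop where
  symm : ∀ i j, A i j = A j i
  zero_one : ∀ i j, A i j = 0 ∨ A i j = 1
  loopless : ∀ i, A i i = 0
  deg_pos : ∀ i, 0 < deg A i

/-!
At step `k` the input to the `i`-th soft-thresholding splits, since `x_{B,i}⋆ = 0`, as
`y_{k,i} − ∇f(y_k)_i = ((I − Q)(y_k − x_B⋆))_i − ∇f(x_B⋆)_i`.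
Every row of `I − Q` has Euclidean norm at most `1`, so the first term is at most `R ≤ αρ√d_i`
in absolute value. Since `Q` has nonpositive off-diagonal entries and `0 ≤ x_B⋆ ≤ x_A⋆`,
`−αρ√d_i ≤ ∇f(x_A⋆)_i ≤ ∇f(x_B⋆)_i ≤ 0`, the first inequality being the optimality of `x_A⋆`
at its inactive coordinate `i`. So the input never exceeds the threshold `2αρ√d_i`.
-/

open Matrix

lemma nonneg_of_forall_pos_le_mul_add_sq {a b : ℝ} (h : ∀ t > 0, 0 ≤ t * a + t ^ 2 * b) :
    0 ≤ a := by
  by_contra! ha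
  set c := |b| + 1
  have hc : 0 < c := by positivity
  set t := -a / (2 * c)
  have ht : 0 < t := div_pos (by linarith) (by positivity)
  have htc : t * c = -a / 2 := by simp only [t]; field_simp
  have hle : t * a + t ^ 2 * b ≤ t * (a / 2) :=
    calc t * a + t ^ 2 * b ≤ t * a + t * (t * c) := by nlinarith [le_abs_self b]
      _ = t * (a / 2) := by rw [htc]; ring
  linarith [h t ht, mul_neg_of_pos_of_neg ht (by linarith : a / 2 < 0)]

section Objective

variable {n : ℕ} {A : Matrix (Fin n) (Fin n) ℝ} {α : ℝ} {v : Fin n}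

lemma gradf_sub_gradf (x z : Fin n → ℝ) :
    gradf A α v x - gradf A α v z = Qmat A α *ᵥ (x - z) := by
  ext i
  simp [gradf, mulVec_sub]

lemma self_sub_gradf_eq (x z : Fin n → ℝ) (i : Fin n) :
    x i - gradf A α v x i = ((1 - Qmat A α) *ᵥ (x - z)) i + (z i - gradf A α v z i) := by
  have h := congrFun (gradf_sub_gradf (A := A) (α := α) (v := v) x z) i
  simp only [Pi.sub_apply] at h
  simp only [sub_mulVec, one_mulVec, Pi.sub_apply]
  linarith

lemma fPR_add_single (hQ : (Qmat A α).IsSymm) (x : Fin n → ℝ) (i : Fin n) (t : ℝ) :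
    fPR A α v (x + Pi.single i t)
      = fPR A α v x + t * gradf A α v x i + t ^ 2 * Qmat A α i i / 2 := by
  have hquad : (x + Pi.single i t) ⬝ᵥ Qmat A α *ᵥ (x + Pi.single i t)
      = x ⬝ᵥ Qmat A α *ᵥ x + 2 * t * (Qmat A α *ᵥ x) i + t ^ 2 * Qmat A α i i := by
    have hcross : x ⬝ᵥ Qmat A α *ᵥ Pi.single i t = t * (Qmat A α *ᵥ x) i := by
      rw [dotProduct_mulVec, ← mulVec_transpose, hQ.eq, dotProduct_single, mul_comm]
    have hdiag : (Qmat A α *ᵥ Pi.single i t) i = Qmat A α i i * t := by simp [mulVec_single]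
    rw [mulVec_add, add_dotProduct, dotProduct_add, dotProduct_add, hcross, single_dotProduct,
      single_dotProduct, hdiag]
    ring
  simp only [fPR, gradf]
  change 1 / 2 * ((x + Pi.single i t) ⬝ᵥ Qmat A α *ᵥ (x + Pi.single i t)) - _
    = 1 / 2 * (x ⬝ᵥ Qmat A α *ᵥ x) - _ + _ + _
  rw [hquad, Pi.add_apply]
  rcases eq_or_ne i v with rfl | hiv
  · simp only [Pi.single_eq_same, if_true]
    ring
  · simp only [Pi.single_eq_of_ne' hiv, if_neg hiv]
    ring

lemma l1w_add_single (x : Fin n → ℝ) {i : Fin n} (hx : x i = 0) (t : ℝ) :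
    l1w A (x + Pi.single i t) = l1w A x + √(deg A i) * |t| := by
  have hterm : ∀ j, √(deg A j) * |(x + Pi.single i t : Fin n → ℝ) j|
      = √(deg A j) * |x j| + (Pi.single i (√(deg A i) * |t|) : Fin n → ℝ) j := by
    intro j
    rcases eq_or_ne j i with rfl | hji
    · simp [hx]
    · simp [Pi.single_eq_of_ne hji]
  simp only [l1w, hterm, sum_add_distrib, sum_pi_single', mem_univ, if_true]

lemma neg_le_gradf_of_forall_Freg_le {ρ : ℝ} (hQ : (Qmat A α).IsSymm) {x : Fin n → ℝ}
    (hmin : ∀ z, Freg A α v ρ x ≤ Freg A α v ρ z) {i : Fin n} (hi : x i = 0) :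
    -(α * ρ * √(deg A i)) ≤ gradf A α v x i := by
  suffices 0 ≤ gradf A α v x i + α * ρ * √(deg A i) by linarith
  refine nonneg_of_forall_pos_le_mul_add_sq (b := Qmat A α i i / 2) fun t ht => ?_
  have h := hmin (x + Pi.single i t)
  rw [Freg, Freg, fPR_add_single hQ, l1w_add_single x hi, abs_of_pos ht] at h
  linarith

end Objective

lemma softT_apply_eq_zero {n : ℕ} (A : Matrix (Fin n) (Fin n) ℝ) {t : ℝ} {w : Fin n → ℝ}
    {i : Fin n} (hw : |w i| ≤ t * √(deg A i)) : softT A t w i = 0 := by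
  simp [softT, hw]

namespace IsGraph

variable {n : ℕ} {A : Matrix (Fin n) (Fin n) ℝ} {α : ℝ} {v : Fin n}

lemma nonneg (hG : IsGraph A) (i j : Fin n) : 0 ≤ A i j := by
  rcases hG.zero_one i j with h | h <;> simp [h]

lemma one_le_deg (hG : IsGraph A) (i : Fin n) : 1 ≤ deg A i := by
  obtain ⟨j, hj⟩ : ∃ j, A i j ≠ 0 := by
    by_contra! h
    simpa [deg, h] using hG.deg_pos i
  have hAij : A i j = 1 := (hG.zero_one i j).resolve_left hj
  calc (1 : ℝ) = A i j := hAij.symm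
    _ ≤ deg A i := single_le_sum (fun k _ => hG.nonneg i k) (mem_univ j)

lemma isSymm_Qmat (hG : IsGraph A) (α : ℝ) : (Qmat A α).IsSymm :=
  IsSymm.ext fun i j => by
    simp only [Qmat, hG.symm i j, eq_comm (a := j)]
    ring

lemma Qmat_self (hG : IsGraph A) (α : ℝ) (i : Fin n) : Qmat A α i i = (1 + α) / 2 := by
  simp [Qmat, hG.loopless i]

lemma Qmat_nonpos (hG : IsGraph A) (hα1 : α ≤ 1) {i j : Fin n} (hij : i ≠ j) :
    Qmat A α i j ≤ 0 := by
  have : 0 ≤ (1 - α) / 2 * A i j / (√(deg A i) * √(deg A j)) :=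
    div_nonneg (mul_nonneg (by linarith : (0 : ℝ) ≤ (1 - α) / 2) (hG.nonneg i j)) (by positivity)
  simpa [Qmat, hij] using this

lemma Qmat_mulVec_nonpos (hG : IsGraph A) (hα1 : α ≤ 1) {u : Fin n → ℝ} (hu : 0 ≤ u)
    {i : Fin n} (hui : u i = 0) : (Qmat A α *ᵥ u) i ≤ 0 := by
  simp only [mulVec, dotProduct]
  refine sum_nonpos fun j _ => ?_
  rcases eq_or_ne i j with rfl | hij
  · simp [hui]
  · exact mul_nonpos_of_nonpos_of_nonneg (hG.Qmat_nonpos hα1 hij) (hu j)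

lemma sum_sq_one_sub_Qmat_le_one (hG : IsGraph A) (hα0 : 0 ≤ α) (hα1 : α ≤ 1) (i : Fin n) :
    ∑ j, (1 - Qmat A α) i j ^ 2 ≤ 1 := by
  have hdi := hG.deg_pos i
  have hentry : ∀ j, (1 - Qmat A α) i j ^ 2
      ≤ ((1 - α) / 2) ^ 2 * ((if i = j then 1 else 0) + A i j / deg A i) := by
    intro j
    rcases eq_or_ne i j with rfl | hij
    · simp only [Matrix.sub_apply, one_apply_eq, hG.Qmat_self, hG.loopless, if_true, zero_div,
        add_zero, mul_one]
      exact le_of_eq (by ring)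
    · have hoff : (1 - Qmat A α) i j = (1 - α) / 2 * A i j / (√(deg A i) * √(deg A j)) := by
        simp [Qmat, hij]
      have hAij : A i j ^ 2 ≤ A i j := by
        rcases hG.zero_one i j with h | h <;> simp [h]
      rw [hoff, if_neg hij, zero_add, div_pow, mul_pow, mul_pow, Real.sq_sqrt hdi.le,
        Real.sq_sqrt (hG.deg_pos j).le, mul_div_assoc]
      refine mul_le_mul_of_nonneg_left ?_ (sq_nonneg _)
      calc A i j ^ 2 / (deg A i * deg A j) ≤ A i j / (deg A i * 1) := by
            gcongr
            · exact hG.nonneg i j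
            · exact hG.one_le_deg j
        _ = A i j / deg A i := by rw [mul_one]
  calc ∑ j, (1 - Qmat A α) i j ^ 2
      ≤ ∑ j, ((1 - α) / 2) ^ 2 * ((if i = j then 1 else 0) + A i j / deg A i) :=
        sum_le_sum fun j _ => hentry j
    _ = ((1 - α) / 2) ^ 2 * 2 := by
      rw [← mul_sum, sum_add_distrib, sum_ite_eq, if_pos (mem_univ i), ← sum_div,
        show ∑ j, A i j = deg A i from rfl, div_self hdi.ne']
      norm_num
    _ ≤ 1 := by nlinarith

lemma abs_one_sub_Qmat_mulVec_le (hG : IsGraph A) (hα0 : 0 ≤ α) (hα1 : α ≤ 1)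
    (u : Fin n → ℝ) (i : Fin n) : |((1 - Qmat A α) *ᵥ u) i| ≤ enorm2 u := by
  have hbound : ∀ w : Fin n → ℝ, ∑ j, w j ^ 2 ≤ 1 → ∑ j, w j * u j ≤ enorm2 u := fun w hw =>
    (Real.sum_mul_le_sqrt_mul_sqrt univ w u).trans
      (mul_le_of_le_one_left (Real.sqrt_nonneg _) (Real.sqrt_le_one.mpr hw))
  have hrow := hG.sum_sq_one_sub_Qmat_le_one hα0 hα1 i
  rw [abs_le]
  constructor
  · have h := hbound (fun j => -(1 - Qmat A α) i j) (by simpa only [neg_sq] using hrow)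
    simp only [neg_mul, sum_neg_distrib] at h
    exact neg_le.mp h
  · exact hbound (fun j => (1 - Qmat A α) i j) hrow

lemma gradf_le_gradf (hG : IsGraph A) (hα1 : α ≤ 1) {x z : Fin n → ℝ} (hzx : z ≤ x) {i : Fin n}
    (hi : x i = z i) : gradf A α v x i ≤ gradf A α v z i := by
  have hdiff := congrFun (gradf_sub_gradf (A := A) (α := α) (v := v) x z) i
  have hQ := hG.Qmat_mulVec_nonpos (α := α) hα1 (sub_nonneg.2 hzx) (sub_eq_zero.2 hi)
  simp only [Pi.sub_apply] at hdiff
  linarith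

lemma gradf_nonpos (hG : IsGraph A) (hα : 0 ≤ α) (hα1 : α ≤ 1) {x : Fin n → ℝ} (hx : 0 ≤ x)
    {i : Fin n} (hi : x i = 0) : gradf A α v x i ≤ 0 := by
  have hQ := hG.Qmat_mulVec_nonpos (α := α) hα1 hx hi
  have hseed : 0 ≤ α * (if i = v then 1 / √(deg A v) else 0) := by positivity
  simp only [gradf]
  linarith

end IsGraph

theorem fista_high_degree_nonactivation_general
    {n : ℕ} (A : Matrix (Fin n) (Fin n) ℝ) (hG : IsGraph A)
    (α ρ : ℝ) (hα : 0 < α) (hα1 : α ≤ 1) (hρ : 0 < ρ) (v : Fin n)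
    (xA xB : Fin n → ℝ)
    (hxA : ∀ z, Freg A α v ρ xA ≤ Freg A α v ρ z)
    -- context facts: minimizers are nonnegative and the solution path is monotone
    (hBnn : ∀ j, 0 ≤ xB j) (hmono : ∀ j, xB j ≤ xA j)
    (x y : ℕ → Fin n → ℝ) (β : ℝ)
    (hx0 : x 0 = 0) (hy0 : y 0 = 0)
    (hxs : ∀ k, x (k + 1) = softT A (2 * α * ρ) (fun i => y k i - gradf A α v (y k) i))
    (hys : ∀ k, y (k + 1) = fun i => x (k + 1) i + β * (x (k + 1) i - x k i))
    (R : ℝ)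
    (hdist : ∀ k : ℕ, enorm2 (fun i => y k i - xB i) ≤ R)
    (i : Fin n) (hiA : xA i = 0)
    (hdeg : (R / (α * ρ)) ^ 2 ≤ deg A i) :
    ∀ k : ℕ, x k i = 0 ∧ y k i = 0 := by
  have hxBi : xB i = 0 := le_antisymm (hiA ▸ hmono i) (hBnn i)
  have hR : R ≤ α * ρ * √(deg A i) := by
    have h := (le_abs_self _).trans (Real.abs_le_sqrt hdeg)
    rwa [div_le_iff₀' (mul_pos hα hρ)] at h
  have hgradA := neg_le_gradf_of_forall_Freg_le (hG.isSymm_Qmat α) hxA hiA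
  have hgradAB := hG.gradf_le_gradf (v := v) hα1 hmono (hiA.trans hxBi.symm)
  have hgradB := hG.gradf_nonpos (v := v) hα.le hα1 hBnn hxBi
  have hstep : ∀ k, x (k + 1) i = 0 := fun k => by
    rw [hxs k]
    refine softT_apply_eq_zero A ?_
    have hCS := hG.abs_one_sub_Qmat_mulVec_le hα.le hα1 (y k - xB) i
    rw [self_sub_gradf_eq (y k) xB i, hxBi, zero_sub]
    have hk : enorm2 (y k - xB) ≤ R := hdist k
    rw [abs_le] at hCS ⊢
    constructor <;> linarith
  have hx : ∀ k, x k i = 0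
    | 0 => by rw [hx0, Pi.zero_apply]
    | k + 1 => hstep k
  refine fun k => ⟨hx k, ?_⟩
  cases k with
  | zero => rw [hy0, Pi.zero_apply]
  | succ k => simp [hys, hx]

/-- High-degree non-activation: run FISTA (η = 1, β = (1−√α)/(1+√α),
x₋₁ = x₀ = 0) on `F_{2ρ} = f + g_B`, and suppose `R > 0` bounds `‖y_k − x_B⋆‖₂` for all `k`.
If coordinate `i` is inactive at the problem-(A) minimizer (`x_{A,i}⋆ = 0`) and
`d_i ≥ (R/(αρ))²`, then FISTA never activates node `i`. -/
theorem fista_high_degree_nonactivation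
    {n : ℕ} (A : Matrix (Fin n) (Fin n) ℝ) (hG : IsGraph A)
    (α ρ : ℝ) (hα : 0 < α) (hα1 : α ≤ 1) (hρ : 0 < ρ) (v : Fin n)
    (xA xB : Fin n → ℝ)
    (hxA : ∀ z, Freg A α v ρ xA ≤ Freg A α v ρ z)
    (hxB : ∀ z, Freg A α v (2 * ρ) xB ≤ Freg A α v (2 * ρ) z)
    -- context facts: minimizers are nonnegative and the solution path is monotone
    (hAnn : ∀ j, 0 ≤ xA j) (hBnn : ∀ j, 0 ≤ xB j) (hmono : ∀ j, xB j ≤ xA j)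
    (x y : ℕ → Fin n → ℝ) (β : ℝ)
    (hβ : β = (1 - Real.sqrt α) / (1 + Real.sqrt α))
    (hx0 : x 0 = 0) (hy0 : y 0 = 0)
    (hxs : ∀ k, x (k + 1) = softT A (2 * α * ρ) (fun i => y k i - gradf A α v (y k) i))
    (hys : ∀ k, y (k + 1) = fun i => x (k + 1) i + β * (x (k + 1) i - x k i))
    (R : ℝ) (hR : 0 < R)
    (hdist : ∀ k : ℕ, enorm2 (fun i => y k i - xB i) ≤ R)
    (i : Fin n) (hiA : xA i = 0)
    (hdeg : (R / (α * ρ)) ^ 2 ≤ deg A i) :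
    ∀ k : ℕ, x k i = 0 ∧ y k i = 0 :=
  fista_high_degree_nonactivation_general A hG α ρ hα hα1 hρ v xA xB hxA hBnn hmono x y β hx0 hy0
    hxs hys R hdist i hiA hdeg
end
end

section
/- Monotonicity of the ℓ1-regularized PageRank regularization path: for the family of objectives F_ρ(x) = f(x) + αρ‖D^{1/2}x‖₁ with unique minimizers x⋆(ρ) = argmin_x F_ρ(x) (ρ ≥ 0), if ρ' > ρ ≥ 0 then x⋆(ρ') ≤ x⋆(ρ) coordinatewise. -/
/-!
Lattice argument. For `x, y ≥ 0` and `ρ ≤ ρ'`,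
`F_ρ(x ⊔ y) + F_ρ'(x ⊓ y) ≤ F_ρ(x) + F_ρ'(y)`: the quadratic form of `Q` is submodular because the
off-diagonal entries of `Q` are nonpositive, the linear term is modular, and on the nonnegative
orthant the heavier ℓ1 penalty sits on the smaller vector `x ⊓ y`. Applied to the two minimizers
this makes `x⋆(ρ) ⊔ x⋆(ρ')` a minimizer of `F_ρ`; since `Q ≽ αI`, the minimizer of `F_ρ` is unique,
so `x⋆(ρ) ⊔ x⋆(ρ') = x⋆(ρ)`.
-/

open Finset

noncomputable section

/-- Euclidean norm on `Fin n → ℝ`. -/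
def enorm {n : ℕ} (x : Fin n → ℝ) : ℝ := Real.sqrt (∑ i, (x i) ^ 2)

open Matrix

section ZMatrix

variable {ι : Type*} [Fintype ι]

lemma mul_add_mul_le_sup_mul_sup_add_inf_mul_inf (a b c d : ℝ) :
    a * c + b * d ≤ (a ⊔ b) * (c ⊔ d) + (a ⊓ b) * (c ⊓ d) := by
  rcases le_total a b with hab | hab <;> rcases le_total c d with hcd | hcd <;>
    simp only [sup_of_le_left, sup_of_le_right, inf_of_le_left, inf_of_le_right, hab, hcd] <;>
    nlinarith

lemma dotProduct_mulVec_eq_sum (Q : Matrix ι ι ℝ) (x y : ι → ℝ) :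
    x ⬝ᵥ Q *ᵥ y = ∑ i, ∑ j, x i * Q i j * y j := by
  simp only [dotProduct, mulVec, mul_sum, mul_assoc]

theorem dotProduct_mulVec_sup_add_inf_le {Q : Matrix ι ι ℝ} (hQ : ∀ i j, i ≠ j → Q i j ≤ 0)
    (x y : ι → ℝ) :
    (x ⊔ y) ⬝ᵥ Q *ᵥ (x ⊔ y) + (x ⊓ y) ⬝ᵥ Q *ᵥ (x ⊓ y) ≤ x ⬝ᵥ Q *ᵥ x + y ⬝ᵥ Q *ᵥ y := by
  simp only [dotProduct_mulVec_eq_sum, ← sum_add_distrib]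
  refine sum_le_sum fun i _ => sum_le_sum fun j _ => ?_
  simp only [Pi.sup_apply, Pi.inf_apply]
  by_cases hij : i = j
  · subst hij
    rcases le_total (x i) (y i) with h | h <;> simp only [h, sup_of_le_left, sup_of_le_right,
      inf_of_le_left, inf_of_le_right] <;> linarith
  · have := mul_le_mul_of_nonpos_left
      (mul_add_mul_le_sup_mul_sup_add_inf_mul_inf (x i) (y i) (x j) (y j)) (hQ i j hij)
    linarith

theorem dotProduct_mulVec_add_add_sub (Q : Matrix ι ι ℝ) (x y : ι → ℝ) :
    (x + y) ⬝ᵥ Q *ᵥ (x + y) + (x - y) ⬝ᵥ Q *ᵥ (x - y)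
      = 2 * (x ⬝ᵥ Q *ᵥ x) + 2 * (y ⬝ᵥ Q *ᵥ y) := by
  simp only [mulVec_add, mulVec_sub, add_dotProduct, sub_dotProduct, dotProduct_add,
    dotProduct_sub]
  ring

end ZMatrix

section PageRank

variable {n : ℕ} {A : Matrix (Fin n) (Fin n) ℝ}

lemma IsGraph.nonneg_s6 (hG : IsGraph A) (i j : Fin n) : 0 ≤ A i j := by
  rcases hG.zero_one i j with h | h <;> simp [h]

lemma Qmat_nonpos_of_ne (hG : IsGraph A) {α : ℝ} (hα1 : α ≤ 1) {i j : Fin n} (hij : i ≠ j) :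
    Qmat A α i j ≤ 0 := by
  have : 0 ≤ (1 - α) / 2 * A i j / (√(deg A i) * √(deg A j)) := by
    have := hG.nonneg_s6 i j
    positivity
  simp only [Qmat, if_neg hij]
  linarith

/-- `𝓛 ≽ 0`, written in the variable `u = D^{-1/2} x`. -/
lemma sum_adj_mul_mul_le (hG : IsGraph A) (u : Fin n → ℝ) :
    ∑ i, ∑ j, A i j * (u i * u j) ≤ ∑ i, deg A i * u i ^ 2 := by
  have hdeg : ∀ i, ∑ j, A j i = deg A i := fun i => sum_congr rfl fun j _ => hG.symm j i
  calc ∑ i, ∑ j, A i j * (u i * u j)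
      ≤ ∑ i, ∑ j, (A i j * u i ^ 2 / 2 + A i j * u j ^ 2 / 2) :=
        sum_le_sum fun i _ => sum_le_sum fun j _ => by
          nlinarith [mul_nonneg (hG.nonneg_s6 i j) (sq_nonneg (u i - u j))]
    _ = ∑ i, deg A i * u i ^ 2 := by
      simp only [sum_add_distrib]
      rw [sum_comm (f := fun i j => A i j * u j ^ 2 / 2)]
      simp only [← sum_div, ← sum_mul, hdeg, ← deg.eq_def]
      ring

lemma dotProduct_Qmat_mulVec (α : ℝ) (x : Fin n → ℝ) :
    x ⬝ᵥ Qmat A α *ᵥ x = (1 + α) / 2 * (x ⬝ᵥ x)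
      - (1 - α) / 2 * ∑ i, ∑ j, A i j * (x i / √(deg A i) * (x j / √(deg A j))) := by
  rw [dotProduct_mulVec_eq_sum]
  simp only [Qmat, dotProduct, mul_sub, sub_mul, sum_sub_distrib, mul_ite, ite_mul, mul_zero,
    zero_mul, sum_ite_eq, mem_univ, if_true, mul_sum]
  congr 1
  · exact sum_congr rfl fun i _ => by ring
  · exact sum_congr rfl fun i _ => sum_congr rfl fun j _ => by field_simp

theorem mul_dotProduct_self_le_dotProduct_Qmat_mulVec (hG : IsGraph A) {α : ℝ} (hα1 : α ≤ 1)
    (x : Fin n → ℝ) : α * (x ⬝ᵥ x) ≤ x ⬝ᵥ Qmat A α *ᵥ x := by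
  have hsq : ∑ i, deg A i * (x i / √(deg A i)) ^ 2 = x ⬝ᵥ x := by
    refine sum_congr rfl fun i _ => ?_
    rw [div_pow, Real.sq_sqrt (hG.deg_pos i).le, mul_div_cancel₀ _ (hG.deg_pos i).ne', sq]
  have hL := sum_adj_mul_mul_le hG fun i => x i / √(deg A i)
  rw [hsq] at hL
  rw [dotProduct_Qmat_mulVec]
  nlinarith

variable {α : ℝ} (v : Fin n)

lemma fPR_eq_dotProduct (x : Fin n → ℝ) :
    fPR A α v x = x ⬝ᵥ Qmat A α *ᵥ x / 2 - α / √(deg A v) * x v := by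
  rw [fPR, dotProduct]
  ring

theorem fPR_sup_add_fPR_inf_le (hG : IsGraph A) (hα1 : α ≤ 1) (x y : Fin n → ℝ) :
    fPR A α v (x ⊔ y) + fPR A α v (x ⊓ y) ≤ fPR A α v x + fPR A α v y := by
  have hquad := dotProduct_mulVec_sup_add_inf_le (fun _ _ => Qmat_nonpos_of_ne hG hα1) x y
  have hlin : (x ⊔ y) v + (x ⊓ y) v = x v + y v := max_add_min _ _
  simp only [fPR_eq_dotProduct]
  linear_combination hquad / 2 - α / √(deg A v) * hlin

lemma l1w_sup_inf_le {x y : Fin n → ℝ} (hx : 0 ≤ x) (hy : 0 ≤ y) {ρ ρ' : ℝ} (hρ : ρ ≤ ρ') :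
    ρ * l1w A (x ⊔ y) + ρ' * l1w A (x ⊓ y) ≤ ρ * l1w A x + ρ' * l1w A y := by
  simp only [l1w, mul_sum, ← sum_add_distrib]
  refine sum_le_sum fun i _ => ?_
  have hs := Real.sqrt_nonneg (deg A i)
  simp only [Pi.sup_apply, Pi.inf_apply, abs_of_nonneg (hx i), abs_of_nonneg (hy i),
    abs_of_nonneg (le_sup_of_le_left (hx i)), abs_of_nonneg (le_inf (hx i) (hy i))]
  rcases le_total (x i) (y i) with h | h
  · simp only [sup_of_le_right h, inf_of_le_left h]
    nlinarith [mul_nonneg (mul_nonneg hs (sub_nonneg.2 h)) (sub_nonneg.2 hρ)]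
  · simp only [sup_of_le_left h, inf_of_le_right h, le_refl]

theorem Freg_sup_add_Freg_inf_le (hG : IsGraph A) (hα : 0 ≤ α) (hα1 : α ≤ 1) {ρ ρ' : ℝ}
    (hρ : ρ ≤ ρ') {x y : Fin n → ℝ} (hx : 0 ≤ x) (hy : 0 ≤ y) :
    Freg A α v ρ (x ⊔ y) + Freg A α v ρ' (x ⊓ y) ≤ Freg A α v ρ x + Freg A α v ρ' y := by
  have hf := fPR_sup_add_fPR_inf_le v hG hα1 x y
  have hl := mul_le_mul_of_nonneg_left (l1w_sup_inf_le (A := A) hx hy hρ) hα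
  simp only [Freg]
  linarith

lemma l1w_half_smul_add_le (x y : Fin n → ℝ) :
    l1w A ((2 : ℝ)⁻¹ • (x + y)) ≤ (l1w A x + l1w A y) / 2 := by
  simp only [l1w, sum_div, ← sum_add_distrib]
  refine sum_le_sum fun i _ => ?_
  have hs := Real.sqrt_nonneg (deg A i)
  have habs : |(2 : ℝ)⁻¹ * (x i + y i)| ≤ (|x i| + |y i|) / 2 := by
    rw [abs_mul, abs_of_pos (by norm_num : (0 : ℝ) < 2⁻¹)]
    linarith [abs_add_le (x i) (y i)]
  simp only [Pi.smul_apply, Pi.add_apply, smul_eq_mul]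
  nlinarith [mul_le_mul_of_nonneg_left habs hs]

lemma fPR_half_smul_add (x y : Fin n → ℝ) :
    fPR A α v ((2 : ℝ)⁻¹ • (x + y))
      = (fPR A α v x + fPR A α v y) / 2 - (x - y) ⬝ᵥ Qmat A α *ᵥ (x - y) / 8 := by
  have h := dotProduct_mulVec_add_add_sub (Qmat A α) x y
  simp only [fPR_eq_dotProduct, mulVec_smul, dotProduct_smul, smul_dotProduct, smul_eq_mul,
    Pi.smul_apply, Pi.add_apply]
  linear_combination h / 8

lemma Freg_half_smul_add_le {ρ : ℝ} (hαρ : 0 ≤ α * ρ) (x y : Fin n → ℝ) :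
    Freg A α v ρ ((2 : ℝ)⁻¹ • (x + y))
      ≤ (Freg A α v ρ x + Freg A α v ρ y) / 2 - (x - y) ⬝ᵥ Qmat A α *ᵥ (x - y) / 8 := by
  have hl := mul_le_mul_of_nonneg_left (l1w_half_smul_add_le (A := A) x y) hαρ
  simp only [Freg, fPR_half_smul_add]
  linarith

theorem eq_of_Freg_le_of_forall_Freg_le (hG : IsGraph A) (hα : 0 < α) (hα1 : α ≤ 1) {ρ : ℝ}
    (hρ : 0 ≤ ρ) {x y : Fin n → ℝ} (hx : ∀ z, Freg A α v ρ x ≤ Freg A α v ρ z)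
    (hy : Freg A α v ρ y ≤ Freg A α v ρ x) : y = x := by
  have hmid := Freg_half_smul_add_le (A := A) v (mul_nonneg hα.le hρ) x y
  have hquad : (x - y) ⬝ᵥ Qmat A α *ᵥ (x - y) ≤ 0 := by
    linarith [hx ((2 : ℝ)⁻¹ • (x + y))]
  have hcoer := mul_dotProduct_self_le_dotProduct_Qmat_mulVec hG hα1 (x - y)
  have hself : (x - y) ⬝ᵥ (x - y) = 0 :=
    le_antisymm (nonpos_of_mul_nonpos_right (hcoer.trans hquad) hα)
      (Fintype.sum_nonneg fun i => mul_self_nonneg _)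
  exact (sub_eq_zero.1 (dotProduct_self_eq_zero.1 hself)).symm

end PageRank

/-- Monotonicity of the ℓ1-regularized PageRank regularization path:
if `ρ' > ρ ≥ 0` then `x⋆(ρ') ≤ x⋆(ρ)` coordinatewise. -/
theorem pagerank_path_monotone
    {n : ℕ} (A : Matrix (Fin n) (Fin n) ℝ) (hG : IsGraph A)
    (α : ℝ) (hα : 0 < α) (hα1 : α ≤ 1) (v : Fin n)
    (ρ ρ' : ℝ) (hρ : 0 ≤ ρ) (hρρ' : ρ < ρ')
    (xs xs' : Fin n → ℝ)
    -- xs = x⋆(ρ), xs' = x⋆(ρ') are the (unique) minimizers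
    (hxs : ∀ z, Freg A α v ρ xs ≤ Freg A α v ρ z)
    (hxs' : ∀ z, Freg A α v ρ' xs' ≤ Freg A α v ρ' z)
    -- context fact: both minimizers are coordinatewise nonnegative
    (hnn : ∀ i, 0 ≤ xs i) (hnn' : ∀ i, 0 ≤ xs' i) :
    ∀ i : Fin n, xs' i ≤ xs i := by
  have hlattice := Freg_sup_add_Freg_inf_le v hG hα.le hα1 hρρ'.le hnn hnn'
  have hsup_le : Freg A α v ρ (xs ⊔ xs') ≤ Freg A α v ρ xs := by
    linarith [hxs' (xs ⊓ xs')]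
  have hsup : xs ⊔ xs' = xs := eq_of_Freg_le_of_forall_Freg_le v hG hα hα1 hρ hxs hsup_le
  exact sup_eq_left.1 hsup
end
end
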